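/- In the setting of the previous statement (K ⊆ ℝ^p nonempty compact, R continuous, J lower semicontinuous and bounded, λ ≥ 0, finite coordinate set I with weights γᵢ > 0, f concave with f(0) = 0 and f(y) → 1 as y → +∞, Φ_σ and Φ₀ defined as there, σ_k positive strictly decreasing to 0): (a) for every k the set argmin_{ℝ^p} Φ_{σ_k} is nonempty; and (b) for every sequence ε_k ≥ 0 with ε_k → 0 and every sequence x_k ∈ ℝ^p with Φ_{σ_k}(x_k) ≤ inf Φ_{σ_k} + ε_k, the sequence (x_k) lies in the compact set K (hence is bounded) and every cluster point x̄ of (x_k) satisfies Φ₀(x̄) = inf_{ℝ^p} Φ₀, i.e., x̄ ∈ argmin Φ₀. -/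

import Mathlib

/-!
Both objectives are `+∞` off the compact set `K` and lower semicontinuous on it, so minimizers
exist and approximate minimizers lie in `K`. Since `f` is concave with a finite limit at `+∞`, it
is nondecreasing with `0 ≤ f ≤ 1` on `[0, ∞)`; hence the smoothed penalty
`∑ γᵢ f(|xᵢ|/τ)` lies below the ℓ₀ penalty, increases as `τ ↓ 0`, and converges to it. For a
cluster point `x̄` of `(x_k)` and `y ∈ K`, fix `τ > 0`: once `σ_k ≤ τ`, the objective with
parameter `τ` at `x_k` is at most `Φ_{σ_k}(x_k) ≤ Φ₀(y) + ε_k`, so lower semicontinuity gives the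
bound `Φ₀(y)` at `x̄`; letting `τ ↓ 0` yields `Φ₀(x̄) ≤ Φ₀(y)`.
-/

open scoped Classical

open Filter Topology

theorem ConcaveOn.monotone_of_tendsto_atTop {f : ℝ → ℝ} (hf : ConcaveOn ℝ Set.univ f) {c : ℝ}
    (hfc : Tendsto f atTop (𝓝 c)) : Monotone f := by
  intro a b hab
  by_contra! hba
  have hab' : a < b := hab.lt_of_ne (by rintro rfl; exact hba.false)
  set d := (f b - f a) / (b - a)
  have hd : d < 0 := div_neg_of_neg_of_pos (by linarith) (by linarith)
  -- beyond `b`, `f` lies below its secant through `a` and `b`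
  have hsecant : ∀ y, b < y → f y ≤ f b + d * (y - b) := fun y hby => by
    have := hf.slope_anti_adjacent (Set.mem_univ a) (Set.mem_univ y) hab' hby
    have := (div_le_iff₀ (sub_pos.2 hby)).1 this
    linarith
  have hline : Tendsto (fun y => f b + d * (y - b)) atTop atBot :=
    tendsto_atBot_add_const_left _ _ <|
      (tendsto_const_mul_atBot_of_neg hd).2 (tendsto_atTop_add_const_right _ _ tendsto_id)
  exact not_tendsto_nhds_of_tendsto_atBot
    (tendsto_atBot_mono' _ (eventually_gt_atTop b |>.mono hsecant) hline) c hfc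

theorem LowerSemicontinuous.le_of_mapClusterPt {X α : Type*} [TopologicalSpace X] {h : X → ℝ}
    (hh : LowerSemicontinuous h) {l : Filter α} {x : α → X} {a : X} (hx : MapClusterPt a l x)
    {u : α → ℝ} {c : ℝ} (hu : Tendsto u l (𝓝 c)) (hle : ∀ᶠ k in l, h (x k) ≤ u k) :
    h a ≤ c := by
  by_contra! hlt
  obtain ⟨d, hcd, hda⟩ := exists_between hlt
  obtain ⟨k, hdk, hku, hkd⟩ := ((mapClusterPt_iff_frequently.1 hx _ (hh a d hda)).and_eventually
    (hle.and (hu.eventually_lt_const hcd))).exists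
  exact (hdk.trans_le hku).not_gt hkd

section ExtendByTop

variable {X : Type*} {K : Set X} {g : X → ℝ} {a x : X}

noncomputable def extendByTop (K : Set X) (g : X → ℝ) (x : X) : EReal :=
  if x ∈ K then (g x : EReal) else ⊤

theorem extendByTop_le_of_isMinOn (ha : a ∈ K) (hmin : IsMinOn g K a) (x : X) :
    extendByTop K g a ≤ extendByTop K g x := by
  unfold extendByTop
  split_ifs with hx
  · exact EReal.coe_le_coe_iff.2 (hmin hx)
  · exact le_top

theorem extendByTop_eq_iInf_of_isMinOn (ha : a ∈ K) (hmin : IsMinOn g K a) :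
    extendByTop K g a = ⨅ x, extendByTop K g x :=
  le_antisymm (le_iInf (extendByTop_le_of_isMinOn ha hmin)) (iInf_le _ a)

theorem mem_and_le_add_of_extendByTop_le_iInf_add {ε : ℝ}
    (hx : extendByTop K g x ≤ (⨅ y, extendByTop K g y) + (ε : EReal)) {y : X} (hy : y ∈ K) :
    x ∈ K ∧ g x ≤ g y + ε := by
  have hxy : extendByTop K g x ≤ ((g y + ε : ℝ) : EReal) := by
    refine hx.trans ?_
    rw [EReal.coe_add]
    gcongr
    exact (iInf_le _ y).trans_eq (if_pos hy)
  unfold extendByTop at hxy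
  split_ifs at hxy with hxK
  · exact ⟨hxK, EReal.coe_le_coe_iff.1 hxy⟩
  · exact absurd (top_le_iff.1 hxy) (EReal.coe_ne_top _)

end ExtendByTop

section Penalty

variable {ι : Type*} (I : Finset ι) (γ : ι → ℝ) (f : ℝ → ℝ)

noncomputable def smoothedPenalty (τ : ℝ) (z : ι → ℝ) : ℝ := ∑ i ∈ I, γ i * f (|z i| / τ)

noncomputable def l0Penalty (z : ι → ℝ) : ℝ := ∑ i ∈ I, γ i * if z i ≠ 0 then (1 : ℝ) else 0

variable {I γ f}

theorem continuous_smoothedPenalty (hf : Continuous f) (τ : ℝ) :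
    Continuous (smoothedPenalty I γ f τ) := by
  unfold smoothedPenalty
  fun_prop

theorem smoothedPenalty_antitoneOn (hγ : ∀ i ∈ I, 0 ≤ γ i) (hf : Monotone f) (z : ι → ℝ) :
    AntitoneOn (fun τ => smoothedPenalty I γ f τ z) (Set.Ioi 0) := fun _ hτ _ _ hττ' =>
  Finset.sum_le_sum fun i hi =>
    mul_le_mul_of_nonneg_left (hf (div_le_div_of_nonneg_left (abs_nonneg _) hτ hττ')) (hγ i hi)

theorem smoothedPenalty_le_l0Penalty (hγ : ∀ i ∈ I, 0 ≤ γ i) (hf : Monotone f)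
    (hf0 : f 0 = 0) (hfc : Tendsto f atTop (𝓝 1)) (τ : ℝ) (z : ι → ℝ) :
    smoothedPenalty I γ f τ z ≤ l0Penalty I γ z := by
  refine Finset.sum_le_sum fun i hi => mul_le_mul_of_nonneg_left ?_ (hγ i hi)
  split_ifs with hzi
  · exact hf.ge_of_tendsto hfc _
  · simp [not_not.1 hzi, hf0]

theorem tendsto_smoothedPenalty (hf0 : f 0 = 0) (hfc : Tendsto f atTop (𝓝 1)) (z : ι → ℝ) :
    Tendsto (fun τ => smoothedPenalty I γ f τ z) (𝓝[>] 0) (𝓝 (l0Penalty I γ z)) := by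
  refine tendsto_finsetSum I fun i _ => Tendsto.const_mul (γ i) ?_
  split_ifs with hzi
  · simp only [div_eq_mul_inv]
    exact hfc.comp (tendsto_inv_nhdsGT_zero.const_mul_atTop (abs_pos.2 hzi))
  · simp [not_not.1 hzi, hf0]

end Penalty

theorem add_l0Penalty_le_of_mapClusterPt {ι : Type*} {I : Finset ι} {γ : ι → ℝ} {f : ℝ → ℝ}
    {F : (ι → ℝ) → ℝ} (hF : LowerSemicontinuous F) (hγ : ∀ i ∈ I, 0 ≤ γ i)
    (hf : Continuous f) (hfm : Monotone f) (hf0 : f 0 = 0) (hfc : Tendsto f atTop (𝓝 1))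
    {σ : ℕ → ℝ} (hσpos : ∀ k, 0 < σ k) (hσ : Tendsto σ atTop (𝓝 0))
    {ε : ℕ → ℝ} (hε : Tendsto ε atTop (𝓝 0)) {x : ℕ → ι → ℝ} {a : ι → ℝ}
    (hx : MapClusterPt a atTop x) {c : ℝ}
    (hxc : ∀ k, F (x k) + smoothedPenalty I γ f (σ k) (x k) ≤ c + ε k) :
    F a + l0Penalty I γ a ≤ c := by
  -- once `σ k < τ`, the lower semicontinuous `F + P_τ` lies below `F + P_{σ k}`
  have hτ : ∀ τ ∈ Set.Ioi (0 : ℝ), F a + smoothedPenalty I γ f τ a ≤ c := fun τ hτ =>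
    (hF.add (continuous_smoothedPenalty hf τ).lowerSemicontinuous).le_of_mapClusterPt hx
      (by simpa using hε.const_add c) <| (hσ.eventually_lt_const hτ).mono fun k hk =>
        (add_le_add_right (smoothedPenalty_antitoneOn hγ hfm (x k) (hσpos k) hτ hk.le) _).trans
          (hxc k)
  exact le_of_tendsto ((tendsto_smoothedPenalty hf0 hfc a).const_add (F a))
    (eventually_mem_nhdsWithin.mono hτ)

theorem approx_minimizers_cluster_to_l0_minimizers_general (p : ℕ)
    (K : Set (Fin p → ℝ)) (hKne : K.Nonempty) (hKc : IsCompact K)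
    (R J : (Fin p → ℝ) → ℝ) (hR : Continuous R)
    (hJ : LowerSemicontinuous J)
    (lam : ℝ) (hlam : 0 ≤ lam)
    (I : Finset (Fin p)) (γ : Fin p → ℝ) (hγ : ∀ i ∈ I, 0 < γ i)
    (f : ℝ → ℝ) (hf : ConcaveOn ℝ Set.univ f) (hf0 : f 0 = 0)
    (hflim : Tendsto f atTop (nhds 1))
    (σ : ℕ → ℝ) (hσpos : ∀ k, 0 < σ k)
    (hσlim : Tendsto σ atTop (nhds 0))
    (Φ : ℕ → (Fin p → ℝ) → EReal)
    (hΦ : ∀ k x, Φ k x = if x ∈ K then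
      (((R x + lam * J x + ∑ i ∈ I, γ i * f (|x i| / σ k)) : ℝ) : EReal) else ⊤)
    (Φ₀ : (Fin p → ℝ) → EReal)
    (hΦ₀ : ∀ x, Φ₀ x = if x ∈ K then
      (((R x + lam * J x + ∑ i ∈ I, γ i * (if x i ≠ 0 then (1 : ℝ) else 0)) : ℝ) : EReal)
      else ⊤) :
    (∀ k : ℕ, ∃ x : Fin p → ℝ, ∀ y : Fin p → ℝ, Φ k x ≤ Φ k y) ∧
    (∀ ε : ℕ → ℝ, (∀ k, 0 ≤ ε k) → Tendsto ε atTop (nhds 0) →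
      ∀ x : ℕ → (Fin p → ℝ),
        (∀ k, Φ k (x k) ≤ (⨅ y, Φ k y) + ((ε k : ℝ) : EReal)) →
        (∀ k, x k ∈ K) ∧
        (∀ xbar : Fin p → ℝ, MapClusterPt xbar atTop x → Φ₀ xbar = ⨅ y, Φ₀ y)) := by
  have hfc : Continuous f := by simpa using hf.continuousOn_interior
  have hfm : Monotone f := hf.monotone_of_tendsto_atTop hflim
  have hγ' : ∀ i ∈ I, 0 ≤ γ i := fun i hi => (hγ i hi).le
  set F : (Fin p → ℝ) → ℝ := fun z => R z + lam * J z
  have hF : LowerSemicontinuous F :=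
    hR.lowerSemicontinuous.add <| (continuous_const_mul lam).comp_lowerSemicontinuous hJ
      fun _ _ h => mul_le_mul_of_nonneg_left h hlam
  have hΦF : ∀ k, Φ k = extendByTop K (fun z => F z + smoothedPenalty I γ f (σ k) z) :=
    fun k => funext (hΦ k)
  have hΦ₀F : Φ₀ = extendByTop K (fun z => F z + l0Penalty I γ z) := funext hΦ₀
  refine ⟨fun k => ?_, fun ε _ hε x hx => ?_⟩
  · obtain ⟨a, haK, hmin⟩ := (hF.add (continuous_smoothedPenalty hfc (σ k)).lowerSemicontinuous
      ).lowerSemicontinuousOn K |>.exists_isMinOn hKne hKc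
    exact ⟨a, hΦF k ▸ extendByTop_le_of_isMinOn haK hmin⟩
  · rw [hΦ₀F]
    simp only [hΦF] at hx
    have hxK : ∀ k, x k ∈ K := fun k =>
      (mem_and_le_add_of_extendByTop_le_iInf_add (hx k) hKne.some_mem).1
    refine ⟨hxK, fun a ha => extendByTop_eq_iInf_of_isMinOn
      (hKc.isClosed.mem_of_mapClusterPt ha (.of_forall hxK)) fun b hb => ?_⟩
    refine add_l0Penalty_le_of_mapClusterPt hF hγ' hfc hfm hf0 hflim hσpos hσlim hε ha fun k => ?_
    calc _ ≤ F b + smoothedPenalty I γ f (σ k) b + ε k :=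
          (mem_and_le_add_of_extendByTop_le_iInf_add (hx k) hb).2
      _ ≤ F b + l0Penalty I γ b + ε k := by
        gcongr; exact smoothedPenalty_le_l0Penalty hγ' hfm hf0 hflim _ _

/-- Parts 2 and 3 of Theorem 4.1: (a) each smoothed problem `Φ_{σ_k}` has a minimizer; and
(b) every sequence of `ε_k`-approximate minimizers of `Φ_{σ_k}` lies in the compact set `K`
and all of its cluster points minimize the ℓ₀-penalized objective `Φ₀`. -/
theorem approx_minimizers_cluster_to_l0_minimizers (p : ℕ)
    (K : Set (Fin p → ℝ)) (hKne : K.Nonempty) (hKc : IsCompact K)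
    (R J : (Fin p → ℝ) → ℝ) (hR : Continuous R)
    (hJ : LowerSemicontinuous J) (hJb : ∃ M : ℝ, ∀ x, |J x| ≤ M)
    (lam : ℝ) (hlam : 0 ≤ lam)
    (I : Finset (Fin p)) (γ : Fin p → ℝ) (hγ : ∀ i ∈ I, 0 < γ i)
    (f : ℝ → ℝ) (hf : ConcaveOn ℝ Set.univ f) (hf0 : f 0 = 0)
    (hflim : Tendsto f atTop (nhds 1))
    (σ : ℕ → ℝ) (hσpos : ∀ k, 0 < σ k) (hσanti : StrictAnti σ)
    (hσlim : Tendsto σ atTop (nhds 0))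
    (Φ : ℕ → (Fin p → ℝ) → EReal)
    (hΦ : ∀ k x, Φ k x = if x ∈ K then
      (((R x + lam * J x + ∑ i ∈ I, γ i * f (|x i| / σ k)) : ℝ) : EReal) else ⊤)
    (Φ₀ : (Fin p → ℝ) → EReal)
    (hΦ₀ : ∀ x, Φ₀ x = if x ∈ K then
      (((R x + lam * J x + ∑ i ∈ I, γ i * (if x i ≠ 0 then (1 : ℝ) else 0)) : ℝ) : EReal)
      else ⊤) :
    (∀ k : ℕ, ∃ x : Fin p → ℝ, ∀ y : Fin p → ℝ, Φ k x ≤ Φ k y) ∧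
    (∀ ε : ℕ → ℝ, (∀ k, 0 ≤ ε k) → Tendsto ε atTop (nhds 0) →
      ∀ x : ℕ → (Fin p → ℝ),
        (∀ k, Φ k (x k) ≤ (⨅ y, Φ k y) + ((ε k : ℝ) : EReal)) →
        (∀ k, x k ∈ K) ∧
        (∀ xbar : Fin p → ℝ, MapClusterPt xbar atTop x → Φ₀ xbar = ⨅ y, Φ₀ y)) :=
  approx_minimizers_cluster_to_l0_minimizers_general p K hKne hKc R J hR hJ lam hlam I γ hγ f hf hf0
    hflim σ hσpos hσlim Φ hΦ Φ₀ hΦ₀
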